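/- arXiv:1901.10651 — 6 statements merged into one kernel-verified Lean document; each statement's English description precedes it below -/
import Mathlib

section
/- Let k ≥ 1, let μ be a Borel probability measure on ℝ^k having an orthogonal cone structure with parameters (σ, δ, r), and let X_1, X_2, … be i.i.d. random variables with law μ defined on some probability space. Fix ε > 0 and let μ_n := (1/n)·Σ_{i=1}^n δ_{X_i} denote the empirical measures. Then almost surely there exists K ∈ ℕ such that for every n ≥ K the empirical measure μ_n has an orthogonal cone structure with parameters (σ, δ + ε, r). -/
open MeasureTheory Real Filter
open scoped RealInnerProductSpace ENNReal

noncomputable section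

/-- The cone `C(e, σ, r) = { z : z ⬝ e > cos σ · ‖z‖, ‖z‖ > r }`. -/
def coneSet {k : ℕ} (e : EuclideanSpace ℝ (Fin k)) (σ r : ℝ) :
    Set (EuclideanSpace ℝ (Fin k)) :=
  {z | Real.cos σ * ‖z‖ < (inner ℝ z e : ℝ) ∧ r < ‖z‖}

/-- A measure on `ℝ^k` has an orthogonal cone structure with parameters `(σ, δ, r)`. -/
def HasOrthConeStructure {k : ℕ} (μ : Measure (EuclideanSpace ℝ (Fin k)))
    (σ δ r : ℝ) : Prop :=
  ∃ e : OrthonormalBasis (Fin k) ℝ (EuclideanSpace ℝ (Fin k)),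
    ENNReal.ofReal (1 - δ) ≤ μ (⋃ j, coneSet (e j) σ r)

/-!
The union `U` of the cones of an orthonormal basis witnessing the structure of `μ` is open,
hence Borel. By the strong law of large numbers for the indicators of `{X i ∈ U}`, almost surely
`μₙ(U) → μ(U) ≥ 1 - δ`, so eventually `μₙ(U) ≥ 1 - δ - ε`, with the same basis.
-/

open Topology

theorem isOpen_coneSet {k : ℕ} (e : EuclideanSpace ℝ (Fin k)) (σ r : ℝ) :
    IsOpen (coneSet e σ r) :=
  (isOpen_lt (continuous_const.mul continuous_norm) (continuous_id.inner continuous_const)).inter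
    (isOpen_lt continuous_const continuous_norm)

section Empirical

variable {α : Type*} [MeasurableSpace α]

def empiricalMeasure (x : ℕ → α) (n : ℕ) : Measure α :=
  (n : ℝ≥0∞)⁻¹ • ∑ i ∈ Finset.range n, Measure.dirac (x i)

theorem empiricalMeasure_apply (x : ℕ → α) (n : ℕ) {s : Set α} (hs : MeasurableSet s) :
    empiricalMeasure x n s =
      ENNReal.ofReal ((∑ i ∈ Finset.range n, s.indicator 1 (x i)) / n) := by
  rcases Nat.eq_zero_or_pos n with rfl | hn
  · simp [empiricalMeasure]
  have hdirac (i : ℕ) : Measure.dirac (x i) s = ENNReal.ofReal (s.indicator 1 (x i)) := by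
    rw [Measure.dirac_apply' _ hs]
    by_cases h : x i ∈ s <;> simp [h]
  rw [empiricalMeasure, Measure.smul_apply, Measure.finsetSum_apply,
    ENNReal.ofReal_div_of_pos (by exact_mod_cast hn), ENNReal.ofReal_sum_of_nonneg
      (fun i _ => Set.indicator_nonneg (f := 1) (fun _ _ => zero_le_one) (x i))]
  simp only [hdirac, ENNReal.ofReal_natCast, smul_eq_mul, ENNReal.div_eq_inv_mul]

theorem ae_tendsto_empiricalMeasure_apply {Ω : Type*} [MeasurableSpace Ω] {P : Measure Ω}
    [IsFiniteMeasure P] {μ : Measure α} {X : ℕ → Ω → α} (hX : ∀ i, Measurable (X i))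
    (hlaw : ∀ i, P.map (X i) = μ)
    (hindep : Pairwise (fun i j => ProbabilityTheory.IndepFun (X i) (X j) P))
    {s : Set α} (hs : MeasurableSet s) :
    ∀ᵐ ω ∂P, Tendsto (fun n => empiricalMeasure (X · ω) n s) atTop (𝓝 (μ s)) := by
  have hf : Measurable (s.indicator (1 : α → ℝ)) := measurable_one.indicator hs
  have hident (i : ℕ) : ProbabilityTheory.IdentDistrib (X i) (X 0) P P :=
    ⟨(hX i).aemeasurable, (hX 0).aemeasurable, by rw [hlaw i, hlaw 0]⟩
  have hint : Integrable (fun ω => s.indicator (1 : α → ℝ) (X 0 ω)) P :=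
    (integrable_const (1 : ℝ)).indicator (hX 0 hs)
  have hmean : ∫ ω, s.indicator 1 (X 0 ω) ∂P = μ.real s := by
    rw [← integral_map (hX 0).aemeasurable hf.aestronglyMeasurable, hlaw 0,
      integral_indicator_one hs]
  have hμs : μ s ≠ ∞ := by
    rw [← hlaw 0, Measure.map_apply (hX 0) hs]; finiteness
  filter_upwards [ProbabilityTheory.strong_law_ae_real (fun i ω => s.indicator 1 (X i ω)) hint
    (fun i j hij => (hindep hij).comp hf hf) (fun i => (hident i).comp hf)] with ω hω
  simp only [empiricalMeasure_apply _ _ hs]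
  rw [← ofReal_measureReal hμs, ← hmean]
  exact ENNReal.tendsto_ofReal hω

end Empirical

theorem eventually_ofReal_sub_le_of_tendsto {ι : Type*} {l : Filter ι} {a : ι → ℝ≥0∞}
    {L : ℝ≥0∞} {c ε : ℝ} (ha : Tendsto a l (𝓝 L)) (hc : ENNReal.ofReal c ≤ L) (hε : 0 < ε) :
    ∀ᶠ i in l, ENNReal.ofReal (c - ε) ≤ a i := by
  rcases le_or_gt (c - ε) 0 with hle | hpos
  · simp [ENNReal.ofReal_of_nonpos hle]
  have hlt : ENNReal.ofReal (c - ε) < L :=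
    ((ENNReal.ofReal_lt_ofReal_iff (by linarith)).2 (by linarith)).trans_le hc
  exact (ha.eventually (lt_mem_nhds hlt)).mono fun _ => le_of_lt

theorem statement1_general {k : ℕ}
    {Ω : Type*} [MeasurableSpace Ω] (P : Measure Ω) [IsProbabilityMeasure P]
    (μ : Measure (EuclideanSpace ℝ (Fin k)))
    (σ δ r : ℝ)
    (hμ : HasOrthConeStructure μ σ δ r)
    (X : ℕ → Ω → EuclideanSpace ℝ (Fin k))
    (hXmeas : ∀ i, Measurable (X i))
    (hlaw : ∀ i, Measure.map (X i) P = μ)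
    (hindep : ProbabilityTheory.iIndepFun X P)
    (ε : ℝ) (hε : 0 < ε) :
    ∀ᵐ ω ∂P, ∃ K : ℕ, ∀ n ≥ K,
      HasOrthConeStructure
        ((n : ℝ≥0∞)⁻¹ • ∑ i ∈ Finset.range n, Measure.dirac (X i ω)) σ (δ + ε) r := by
  obtain ⟨e, he⟩ := hμ
  have hU : MeasurableSet (⋃ j, coneSet (e j) σ r) :=
    (isOpen_iUnion fun j => isOpen_coneSet (e j) σ r).measurableSet
  filter_upwards [ae_tendsto_empiricalMeasure_apply hXmeas hlaw
    (fun i j hij => hindep.indepFun hij) hU] with ω hω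
  obtain ⟨K, hK⟩ := eventually_atTop.1 (eventually_ofReal_sub_le_of_tendsto hω he hε)
  exact ⟨K, fun n hn => ⟨e, by rw [sub_add_eq_sub_sub]; exact hK n hn⟩⟩

/-- almost surely, the empirical measures of i.i.d. samples from a measure
with an orthogonal cone structure `(σ, δ, r)` eventually have an orthogonal cone structure
with parameters `(σ, δ + ε, r)`. -/
theorem statement1 {k : ℕ} (hk : 1 ≤ k)
    {Ω : Type*} [MeasurableSpace Ω] (P : Measure Ω) [IsProbabilityMeasure P]
    (μ : Measure (EuclideanSpace ℝ (Fin k))) [IsProbabilityMeasure μ]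
    (σ δ r : ℝ) (hσ : σ ∈ Set.Ioo 0 (π / 4)) (hδ : δ ∈ Set.Ico (0 : ℝ) 1) (hr : 0 < r)
    (hμ : HasOrthConeStructure μ σ δ r)
    (X : ℕ → Ω → EuclideanSpace ℝ (Fin k))
    (hXmeas : ∀ i, Measurable (X i))
    (hlaw : ∀ i, Measure.map (X i) P = μ)
    (hindep : ProbabilityTheory.iIndepFun X P)
    (ε : ℝ) (hε : 0 < ε) :
    ∀ᵐ ω ∂P, ∃ K : ℕ, ∀ n ≥ K,
      HasOrthConeStructure
        ((n : ℝ≥0∞)⁻¹ • ∑ i ∈ Finset.range n, Measure.dirac (X i ω)) σ (δ + ε) r :=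
  statement1_general P μ σ δ r hμ X hXmeas hlaw hindep ε hε
end
end

section
/- Fix j ∈ {1, …, N}. Then every v ∈ C¹(ℝ^d) with ∫(|∇v|² + v²) ρ_j dx < ∞ and ⟨v, q_j⟩_{ρ_j} = 0 satisfies ∫_{ℝ^d} |∇v|² ρ_j dx ≥ Θ(1 − S) ∫_{ℝ^d} v² ρ_j dx. -/
/-!
Let `μ = ρ_j dx`, a probability measure, and `T = ∫ q_j² dμ`. Since
`Σ_k w_k ρ_k ρ_j / ρ = ρ_j`, `T = 1 - Σ_{k ≠ j} w_k ∫ ρ_k ρ_j / ρ ≥ 1 - S`, and `0 ≤ q_j ≤ 1`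
gives `T ≤ ∫ q_j dμ`. As `v ⟂ q_j`, `Cov(v, q_j) = -E v · E q_j`, so Cauchy–Schwarz for the
covariance bounds the squared mean of `v` by its variance, which yields `T ∫ v² dμ ≤ Var v`.
Finally `v - E v` is an admissible test function for `Θ_j ≥ Θ`, so `Θ Var v ≤ ∫ |∇v|² dμ`.
-/

open MeasureTheory Real

noncomputable section

/-- The set of Rayleigh quotients `(∫ |∇f|² ρk dx) / (∫ f² ρk dx)` over admissible
`C¹` test functions `f` with `∫ f ρk dx = 0` and `∫ f² ρk dx > 0`; the indivisibility
parameter `Θ_k` of the paper is its infimum. -/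
def rayleighSet {d : ℕ} (ρk : EuclideanSpace ℝ (Fin d) → ℝ) : Set ℝ :=
  {R | ∃ f : EuclideanSpace ℝ (Fin d) → ℝ,
      ContDiff ℝ 1 f ∧
      Integrable (fun x => ‖gradient f x‖ ^ 2 * ρk x) ∧
      Integrable (fun x => f x ^ 2 * ρk x) ∧
      (∫ x, f x * ρk x) = 0 ∧
      0 < ∫ x, f x ^ 2 * ρk x ∧
      R = (∫ x, ‖gradient f x‖ ^ 2 * ρk x) / ∫ x, f x ^ 2 * ρk x}

open ProbabilityTheory

section WithDensity

variable {α : Type*} [MeasurableSpace α] {μ : Measure α} {ρ : α → ℝ}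

lemma integral_withDensity_ofReal (hρ : Measurable ρ) (hρ0 : ∀ x, 0 ≤ ρ x)
    (g : α → ℝ) :
    ∫ x, g x ∂μ.withDensity (fun x => ENNReal.ofReal (ρ x)) = ∫ x, g x * ρ x ∂μ := by
  rw [integral_withDensity_eq_integral_toReal_smul hρ.ennreal_ofReal
    (ae_of_all _ fun _ => ENNReal.ofReal_lt_top)]
  simp [ENNReal.toReal_ofReal (hρ0 _), mul_comm]

lemma integrable_withDensity_ofReal_iff (hρ : Measurable ρ) (hρ0 : ∀ x, 0 ≤ ρ x)
    {g : α → ℝ} :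
    Integrable g (μ.withDensity fun x => ENNReal.ofReal (ρ x)) ↔
      Integrable (fun x => g x * ρ x) μ := by
  rw [integrable_withDensity_iff_integrable_smul' hρ.ennreal_ofReal
    (ae_of_all _ fun _ => ENNReal.ofReal_lt_top)]
  simp [ENNReal.toReal_ofReal (hρ0 _), mul_comm]

lemma isProbabilityMeasure_withDensity_ofReal (hρ0 : ∀ x, 0 ≤ ρ x)
    (hρ1 : ∫ x, ρ x ∂μ = 1) :
    IsProbabilityMeasure (μ.withDensity fun x => ENNReal.ofReal (ρ x)) := by
  constructor
  rw [withDensity_apply _ MeasurableSet.univ, Measure.restrict_univ,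
    ← ofReal_integral_eq_lintegral_ofReal (Integrable.of_integral_ne_zero (by simp [hρ1]))
      (ae_of_all _ hρ0), hρ1, ENNReal.ofReal_one]

end WithDensity

section Covariance

variable {Ω : Type*} [MeasurableSpace Ω] {μ : Measure Ω} {X Y : Ω → ℝ}

lemma MemLp.inner_toLp_toLp (hX : MemLp X 2 μ) (hY : MemLp Y 2 μ) :
    inner ℝ (hX.toLp X) (hY.toLp Y) = ∫ ω, X ω * Y ω ∂μ := by
  rw [L2.inner_def]
  refine integral_congr_ae ?_
  filter_upwards [hX.coeFn_toLp, hY.coeFn_toLp] with ω hXω hYω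
  simp [hXω, hYω, mul_comm]

lemma sq_integral_mul_le_integral_sq_mul_integral_sq (hX : MemLp X 2 μ) (hY : MemLp Y 2 μ) :
    (∫ ω, X ω * Y ω ∂μ) ^ 2 ≤ (∫ ω, X ω ^ 2 ∂μ) * ∫ ω, Y ω ^ 2 ∂μ := by
  have h := real_inner_mul_inner_self_le (hX.toLp X) (hY.toLp Y)
  simp only [MemLp.inner_toLp_toLp, ← sq] at h
  nlinarith [abs_mul_abs_self (∫ ω, X ω * Y ω ∂μ)]

lemma covariance_sq_le_variance_mul_variance [IsFiniteMeasure μ] (hX : MemLp X 2 μ)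
    (hY : MemLp Y 2 μ) : cov[X, Y; μ] ^ 2 ≤ Var[X; μ] * Var[Y; μ] := by
  rw [covariance, variance_eq_integral hX.aemeasurable, variance_eq_integral hY.aemeasurable]
  exact sq_integral_mul_le_integral_sq_mul_integral_sq (hX.sub (memLp_const _))
    (hY.sub (memLp_const _))

lemma integral_sq_mul_integral_sq_le_variance [IsProbabilityMeasure μ] (hX : MemLp X 2 μ)
    (hY : MemLp Y 2 μ) (horth : ∫ ω, X ω * Y ω ∂μ = 0)
    (hY2 : ∫ ω, Y ω ^ 2 ∂μ ≤ ∫ ω, Y ω ∂μ) :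
    (∫ ω, Y ω ^ 2 ∂μ) * ∫ ω, X ω ^ 2 ∂μ ≤ Var[X; μ] := by
  have hcov := covariance_sq_le_variance_mul_variance hX hY
  have hX2 : ∫ ω, X ω ^ 2 ∂μ = Var[X; μ] + (∫ ω, X ω ∂μ) ^ 2 := by
    rw [variance_eq_sub hX]; simp only [Pi.pow_apply]; ring
  rw [covariance_eq_sub hX hY, variance_eq_sub hY] at hcov
  simp only [Pi.mul_apply, Pi.pow_apply, horth, zero_sub, neg_sq] at hcov
  rw [hX2]
  set c := ∫ ω, X ω ∂μ
  set A := ∫ ω, Y ω ∂μ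
  set T := ∫ ω, Y ω ^ 2 ∂μ
  set V := Var[X; μ]
  have hV : 0 ≤ V := variance_nonneg X μ
  have hT : 0 ≤ T := integral_nonneg fun ω => sq_nonneg _
  -- `c² T² ≤ c² A² ≤ V (T - A²) ≤ V (T - T²)`, then divide by `T`
  have hTA : T ^ 2 ≤ A ^ 2 := pow_le_pow_left₀ hT hY2 2
  have key : T * (c ^ 2 * T) ≤ T * (V * (1 - T)) := by
    nlinarith [mul_le_mul_of_nonneg_left hTA (sq_nonneg c)]
  rcases hT.eq_or_lt with hT0 | hTpos
  · rw [← hT0]; simpa using hV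
  · nlinarith [le_of_mul_le_mul_left key hTpos]

end Covariance

section Rayleigh

variable {d : ℕ} {ρk : EuclideanSpace ℝ (Fin d) → ℝ}

lemma sInf_rayleighSet_mul_le (hρk : ∀ x, 0 ≤ ρk x) {f : EuclideanSpace ℝ (Fin d) → ℝ}
    (hf : ContDiff ℝ 1 f) (hf1 : Integrable (fun x => ‖gradient f x‖ ^ 2 * ρk x))
    (hf2 : Integrable (fun x => f x ^ 2 * ρk x)) (hf0 : ∫ x, f x * ρk x = 0) :
    sInf (rayleighSet ρk) * ∫ x, f x ^ 2 * ρk x ≤ ∫ x, ‖gradient f x‖ ^ 2 * ρk x := by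
  have hD : 0 ≤ ∫ x, ‖gradient f x‖ ^ 2 * ρk x :=
    integral_nonneg fun x => mul_nonneg (sq_nonneg _) (hρk x)
  rcases (integral_nonneg fun x => mul_nonneg (sq_nonneg (f x)) (hρk x) :
    0 ≤ ∫ x, f x ^ 2 * ρk x).eq_or_lt with h0 | hpos
  · simpa [← h0] using hD
  have hbdd : BddBelow (rayleighSet ρk) := by
    refine ⟨0, ?_⟩
    rintro _ ⟨g, -, -, -, -, hg, rfl⟩
    exact div_nonneg (integral_nonneg fun x => mul_nonneg (sq_nonneg _) (hρk x)) hg.le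
  have hmem :
      (∫ x, ‖gradient f x‖ ^ 2 * ρk x) / ∫ x, f x ^ 2 * ρk x ∈ rayleighSet ρk :=
    ⟨f, hf, hf1, hf2, hf0, hpos, rfl⟩
  rw [← le_div_iff₀ hpos]
  exact csInf_le hbdd hmem

lemma sInf_rayleighSet_mul_variance_le (hρm : Measurable ρk) (hρk : ∀ x, 0 ≤ ρk x)
    (hρ1 : ∫ x, ρk x = 1) {v : EuclideanSpace ℝ (Fin d) → ℝ} (hv : ContDiff ℝ 1 v)
    (hv1 : Integrable (fun x => ‖gradient v x‖ ^ 2 * ρk x))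
    (hv2 : Integrable (fun x => v x ^ 2 * ρk x)) :
    sInf (rayleighSet ρk) * Var[v; volume.withDensity fun x => ENNReal.ofReal (ρk x)] ≤
      ∫ x, ‖gradient v x‖ ^ 2 * ρk x := by
  set μ := volume.withDensity fun x => ENNReal.ofReal (ρk x)
  have := isProbabilityMeasure_withDensity_ofReal hρk hρ1
  have hvL2 : MemLp v 2 μ := (memLp_two_iff_integrable_sq hv.continuous.aestronglyMeasurable).2
    ((integrable_withDensity_ofReal_iff hρm hρk).2 hv2)
  have hgrad : gradient (fun x => v x - μ[v]) = gradient v := by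
    ext1 x; simp [gradient, fderiv_sub_const]
  have hcentered : ∫ x, (v x - μ[v]) * ρk x = 0 := by
    rw [← integral_withDensity_ofReal hρm hρk, integral_sub (hvL2.integrable one_le_two)
      (integrable_const _)]
    simp
  rw [variance_eq_integral hvL2.aemeasurable, integral_withDensity_ofReal hρm hρk, ← hgrad]
  refine sInf_rayleighSet_mul_le hρk (hv.sub contDiff_const) (by rwa [hgrad]) ?_ hcentered
  exact (integrable_withDensity_ofReal_iff hρm hρk).1 (hvL2.sub (memLp_const _)).integrable_sq

end Rayleigh

section Mixture

variable {α ι : Type*} [Fintype ι] {w : ι → ℝ} {ρ : ι → α → ℝ} {ρtot : α → ℝ}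

lemma mul_le_mixture (hw : ∀ k, 0 < w k) (hρ0 : ∀ k x, 0 ≤ ρ k x)
    (hρtot : ρtot = fun x => ∑ k, w k * ρ k x) (k : ι) (x : α) :
    w k * ρ k x ≤ ρtot x := by
  rw [hρtot]
  exact Finset.single_le_sum (f := fun i => w i * ρ i x)
    (fun i _ => mul_nonneg (hw i).le (hρ0 i x)) (Finset.mem_univ k)

lemma sqrt_mul_div_mixture_le_one (hw : ∀ k, 0 < w k) (hρ0 : ∀ k x, 0 ≤ ρ k x)
    (hρtot : ρtot = fun x => ∑ k, w k * ρ k x) (hpos : ∀ x, 0 < ρtot x) (j : ι) (x : α) :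
    √(w j * ρ j x / ρtot x) ≤ 1 :=
  sqrt_le_one.2 <| (div_le_one (hpos x)).2 (mul_le_mixture hw hρ0 hρtot j x)

variable [MeasurableSpace α] {μ : Measure α}

lemma measurable_mixture (hρm : ∀ k, Measurable (ρ k))
    (hρtot : ρtot = fun x => ∑ k, w k * ρ k x) : Measurable ρtot :=
  hρtot ▸ Finset.measurable_sum _ fun k _ => (hρm k).const_mul _

lemma integrable_mul_div_mixture (hw : ∀ k, 0 < w k) (hρm : ∀ k, Measurable (ρ k))
    (hρ0 : ∀ k x, 0 ≤ ρ k x) (hρtot : ρtot = fun x => ∑ k, w k * ρ k x)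
    (hpos : ∀ x, 0 < ρtot x) (k : ι) {j : ι} (hj : Integrable (ρ j) μ) :
    Integrable (fun x => ρ k x * ρ j x / ρtot x) μ := by
  refine (hj.const_mul (w k)⁻¹).mono'
    (((hρm k).mul (hρm j)).div (measurable_mixture hρm hρtot)).aestronglyMeasurable
    (ae_of_all _ fun x => ?_)
  rw [Real.norm_of_nonneg (div_nonneg (mul_nonneg (hρ0 k x) (hρ0 j x)) (hpos x).le),
    mul_div_right_comm]
  refine mul_le_mul_of_nonneg_right ?_ (hρ0 j x)
  rw [div_le_iff₀ (hpos x), ← div_eq_inv_mul, le_div_iff₀' (hw k)]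
  exact mul_le_mixture hw hρ0 hρtot k x

lemma sum_mul_integral_mul_div_mixture (hw : ∀ k, 0 < w k) (hρm : ∀ k, Measurable (ρ k))
    (hρ0 : ∀ k x, 0 ≤ ρ k x) (hρtot : ρtot = fun x => ∑ k, w k * ρ k x)
    (hpos : ∀ x, 0 < ρtot x) {j : ι} (hj : ∫ x, ρ j x ∂μ = 1) :
    ∑ k, w k * ∫ x, ρ k x * ρ j x / ρtot x ∂μ = 1 := by
  have hint k := integrable_mul_div_mixture hw hρm hρ0 hρtot hpos k
    (Integrable.of_integral_ne_zero (by simp [hj]) : Integrable (ρ j) μ)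
  simp_rw [← integral_const_mul]
  rw [← integral_finsetSum _ fun k _ => (hint k).const_mul _, ← hj]
  refine integral_congr_ae (ae_of_all _ fun x => ?_)
  have hx := (hpos x).ne'
  subst hρtot
  simp_rw [mul_div_assoc', ← Finset.sum_div, ← mul_assoc, ← Finset.sum_mul]
  field_simp

lemma one_sub_le_mul_integral_sq_div_mixture (hw : ∀ k, 0 < w k) (hw1 : ∑ k, w k = 1)
    (hρm : ∀ k, Measurable (ρ k)) (hρ0 : ∀ k x, 0 ≤ ρ k x)
    (hρtot : ρtot = fun x => ∑ k, w k * ρ k x) (hpos : ∀ x, 0 < ρtot x) {j : ι}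
    (hj : ∫ x, ρ j x ∂μ = 1) {S : ℝ} (hS0 : 0 ≤ S)
    (hS : ∀ k, k ≠ j → ∫ x, ρ k x * ρ j x / ρtot x ∂μ ≤ S) :
    1 - S ≤ w j * ∫ x, ρ j x * ρ j x / ρtot x ∂μ := by
  classical
  have hsum := sum_mul_integral_mul_div_mixture hw hρm hρ0 hρtot hpos hj
  rw [← Finset.add_sum_erase _ _ (Finset.mem_univ j)] at hsum
  have hw' := Finset.add_sum_erase _ w (Finset.mem_univ j)
  rw [hw1] at hw'
  have hle : ∑ k ∈ Finset.univ.erase j, w k * ∫ x, ρ k x * ρ j x / ρtot x ∂μ ≤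
      (∑ k ∈ Finset.univ.erase j, w k) * S := by
    rw [Finset.sum_mul]
    exact Finset.sum_le_sum fun k hk =>
      mul_le_mul_of_nonneg_left (hS k (Finset.ne_of_mem_erase hk)) (hw k).le
  nlinarith [hw j]

end Mixture

theorem statement5_general {d : ℕ} {N : ℕ}
    (w : Fin N → ℝ) (hw : ∀ k, 0 < w k) (hw1 : ∑ k, w k = 1)
    (ρ : Fin N → EuclideanSpace ℝ (Fin d) → ℝ)
    (hρC1 : ∀ k, ContDiff ℝ 1 (ρ k)) (hρnn : ∀ k x, 0 ≤ ρ k x)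
    (hρ1 : ∀ k, ∫ x, ρ k x = 1)
    (ρtot : EuclideanSpace ℝ (Fin d) → ℝ)
    (hρtot : ρtot = fun x => ∑ k, w k * ρ k x)
    (hpos : ∀ x, 0 < ρtot x)
    (S : ℝ)
    (hS : IsGreatest
      ((fun p : Fin N × Fin N => ∫ x, ρ p.1 x * ρ p.2 x / ρtot x) ''
        {p | p.1 ≠ p.2}) S)
    (Θ : ℝ) (hΘnn : 0 ≤ Θ)
    (hΘ : IsLeast {a : ℝ | ∃ k, a = sInf (rayleighSet (ρ k))} Θ)
    (j : Fin N)
    (v : EuclideanSpace ℝ (Fin d) → ℝ) (hv : ContDiff ℝ 1 v)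
    (hv1 : Integrable (fun x => ‖gradient v x‖ ^ 2 * ρ j x))
    (hv2 : Integrable (fun x => v x ^ 2 * ρ j x))
    (horth : ∫ x, v x * Real.sqrt (w j * ρ j x / ρtot x) * ρ j x = 0) :
    Θ * (1 - S) * ∫ x, v x ^ 2 * ρ j x ≤ ∫ x, ‖gradient v x‖ ^ 2 * ρ j x := by
  have hρm k : Measurable (ρ k) := (hρC1 k).continuous.measurable
  set μ := volume.withDensity fun x => ENNReal.ofReal (ρ j x)
  have : IsProbabilityMeasure μ := isProbabilityMeasure_withDensity_ofReal (hρnn j) (hρ1 j)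
  set q := fun x => √(w j * ρ j x / ρtot x)
  have hq_sq x : q x ^ 2 = w j * ρ j x / ρtot x :=
    sq_sqrt (div_nonneg (mul_nonneg (hw j).le (hρnn j x)) (hpos x).le)
  have hq_le := sqrt_mul_div_mixture_le_one hw hρnn hρtot hpos j
  have hqm : Measurable q := (((hρm j).const_mul _).div (measurable_mixture hρm hρtot)).sqrt
  have hqL2 : MemLp q 2 μ := MemLp.of_bound hqm.aestronglyMeasurable 1 <|
    ae_of_all _ fun x => by rw [norm_of_nonneg (sqrt_nonneg _)]; exact hq_le x
  have hvL2 : MemLp v 2 μ := (memLp_two_iff_integrable_sq hv.continuous.aestronglyMeasurable).2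
    ((integrable_withDensity_ofReal_iff (hρm j) (hρnn j)).2 hv2)
  have hT : 1 - S ≤ ∫ x, q x ^ 2 ∂μ := by
    have hS0 : 0 ≤ S := by
      obtain ⟨p, -, rfl⟩ := hS.1
      exact integral_nonneg fun x => div_nonneg (mul_nonneg (hρnn _ x) (hρnn _ x)) (hpos x).le
    refine (one_sub_le_mul_integral_sq_div_mixture hw hw1 hρm hρnn hρtot hpos (hρ1 j) hS0
      fun k hk => hS.2 ⟨(k, j), hk, rfl⟩).trans_eq ?_
    rw [integral_withDensity_ofReal (hρm j) (hρnn j), ← integral_const_mul]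
    simp_rw [hq_sq]
    ring_nf
  have hvar : (∫ x, q x ^ 2 ∂μ) * ∫ x, v x ^ 2 ∂μ ≤ Var[v; μ] := by
    refine integral_sq_mul_integral_sq_le_variance hvL2 hqL2 ?_ ?_
    · rwa [integral_withDensity_ofReal (hρm j) (hρnn j)]
    · exact integral_mono hqL2.integrable_sq (hqL2.integrable one_le_two) fun x =>
        by nlinarith [sqrt_nonneg (w j * ρ j x / ρtot x), hq_le x]
  calc Θ * (1 - S) * ∫ x, v x ^ 2 * ρ j x
      = Θ * ((1 - S) * ∫ x, v x ^ 2 ∂μ) := by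
        rw [integral_withDensity_ofReal (hρm j) (hρnn j), mul_assoc]
    _ ≤ Θ * Var[v; μ] := mul_le_mul_of_nonneg_left
        ((mul_le_mul_of_nonneg_right hT (integral_nonneg fun x => sq_nonneg _)).trans hvar) hΘnn
    _ ≤ sInf (rayleighSet (ρ j)) * Var[v; μ] :=
        mul_le_mul_of_nonneg_right (hΘ.2 ⟨j, rfl⟩) (variance_nonneg _ _)
    _ ≤ ∫ x, ‖gradient v x‖ ^ 2 * ρ j x :=
        sInf_rayleighSet_mul_variance_le (hρm j) (hρnn j) (hρ1 j) hv hv1 hv2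

/-- for every `C¹` function `v` with finite `H¹(ρ_j)`-norm which is
orthogonal to `q_j = √(w_j ρ_j/ρ)` in `L²(ρ_j)`, one has
`∫ |∇v|² ρ_j dx ≥ Θ (1 - S) ∫ v² ρ_j dx`. -/
theorem statement5 {d : ℕ} {N : ℕ} (hN : 2 ≤ N)
    (w : Fin N → ℝ) (hw : ∀ k, 0 < w k) (hw1 : ∑ k, w k = 1)
    (ρ : Fin N → EuclideanSpace ℝ (Fin d) → ℝ)
    (hρC1 : ∀ k, ContDiff ℝ 1 (ρ k)) (hρnn : ∀ k x, 0 ≤ ρ k x)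
    (hρ1 : ∀ k, ∫ x, ρ k x = 1)
    (ρtot : EuclideanSpace ℝ (Fin d) → ℝ)
    (hρtot : ρtot = fun x => ∑ k, w k * ρ k x)
    (hpos : ∀ x, 0 < ρtot x)
    (S : ℝ)
    (hS : IsGreatest
      ((fun p : Fin N × Fin N => ∫ x, ρ p.1 x * ρ p.2 x / ρtot x) ''
        {p | p.1 ≠ p.2}) S)
    (Θ : ℝ) (hΘnn : 0 ≤ Θ)
    (hΘ : IsLeast {a : ℝ | ∃ k, a = sInf (rayleighSet (ρ k))} Θ)
    (j : Fin N)
    (v : EuclideanSpace ℝ (Fin d) → ℝ) (hv : ContDiff ℝ 1 v)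
    (hv1 : Integrable (fun x => ‖gradient v x‖ ^ 2 * ρ j x))
    (hv2 : Integrable (fun x => v x ^ 2 * ρ j x))
    (horth : ∫ x, v x * Real.sqrt (w j * ρ j x / ρtot x) * ρ j x = 0) :
    Θ * (1 - S) * ∫ x, v x ^ 2 * ρ j x ≤ ∫ x, ‖gradient v x‖ ^ 2 * ρ j x :=
  statement5_general w hw hw1 ρ hρC1 hρnn hρ1 ρtot hρtot hpos S hS Θ hΘnn hΘ j v hv hv1 hv2 horth
end
end

section
/- Assume S < ∞ and fix j ∈ {1, …, N}. Then every measurable u : X → ℝ with ∫_X u² ρ d𝔪 = 1 and ⟨u, q_j⟩_ρ = 0 satisfies |⟨u, q_j⟩_{ρ_j}| ≤ √((1 − w_j) S / w_j). -/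
/-!
Orthogonality of `u` to `q_j` in `L²(ρ)` gives
`w_j ⟨u, q_j⟩_{ρ_j} = -⟨u, q_j (ρ - w_j ρ_j) / ρ⟩_ρ`. By Cauchy–Schwarz in `L²(ρ)` the square of
the right-hand side is at most
`∫ q_j² (ρ - w_j ρ_j)² / ρ ≤ ∫ w_j ρ_j (ρ - w_j ρ_j) / ρ = w_j ∑_{k ≠ j} w_k ∫ ρ_j ρ_k / ρ`,
where the inequality uses `(ρ - w_j ρ_j) / ρ ≤ 1`, and the sum is at most `(1 - w_j) S`.
-/

open MeasureTheory Real Finset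

noncomputable section

section CauchySchwarz

variable {X : Type*} [MeasurableSpace X] {m : Measure X}

theorem sq_integral_mul_le_integral_sq_mul_integral_sq_s6 {f g : X → ℝ} (hf : MemLp f 2 m)
    (hg : MemLp g 2 m) :
    (∫ x, f x * g x ∂m) ^ 2 ≤ (∫ x, f x ^ 2 ∂m) * ∫ x, g x ^ 2 ∂m := by
  have holder := integral_mul_norm_le_Lp_mul_Lq Real.HolderConjugate.two_two
    (by simpa using hf) (by simpa using hg)
  simp only [norm_eq_abs, rpow_two, sq_abs, ← sqrt_eq_rpow] at holder
  calc (∫ x, f x * g x ∂m) ^ 2 = |∫ x, f x * g x ∂m| ^ 2 := (sq_abs _).symm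
    _ ≤ (√(∫ x, f x ^ 2 ∂m) * √(∫ x, g x ^ 2 ∂m)) ^ 2 := by
      gcongr
      refine abs_integral_le_integral_abs.trans ?_
      simpa only [abs_mul] using holder
    _ = (∫ x, f x ^ 2 ∂m) * ∫ x, g x ^ 2 ∂m := by
      rw [mul_pow, sq_sqrt (integral_nonneg fun _ => sq_nonneg _),
        sq_sqrt (integral_nonneg fun _ => sq_nonneg _)]

theorem memLp_two_of_sq_eq {h F : X → ℝ} (hm : AEMeasurable h m) (hF : Integrable F m)
    (hsq : ∀ x, h x ^ 2 = F x) : MemLp h 2 m :=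
  (memLp_two_iff_integrable_sq hm.aestronglyMeasurable).2 <|
    hF.congr (.of_forall fun x => (hsq x).symm)

/-- Cauchy–Schwarz in `L²(ρ)` reduces to the unweighted case via `f * g = (f * √ρ) * (g / √ρ)`. -/
theorem memLp_two_mul_sqrt_and_div_sqrt {f g ρ : X → ℝ} (hρ : ∀ x, 0 < ρ x)
    (hfm : AEMeasurable f m) (hgm : AEMeasurable g m) (hρm : AEMeasurable ρ m)
    (hf : Integrable (fun x => f x ^ 2 * ρ x) m) (hg : Integrable (fun x => g x ^ 2 / ρ x) m) :
    MemLp (fun x => f x * √(ρ x)) 2 m ∧ MemLp (fun x => g x / √(ρ x)) 2 m :=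
  ⟨memLp_two_of_sq_eq (by fun_prop) hf fun x => by rw [mul_pow, sq_sqrt (hρ x).le],
    memLp_two_of_sq_eq (by fun_prop) hg fun x => by rw [div_pow, sq_sqrt (hρ x).le]⟩

theorem mul_sqrt_mul_div_sqrt {a b r : ℝ} (hr : 0 < r) : a * √r * (b / √r) = a * b := by
  have := (sqrt_pos.2 hr).ne'
  field_simp

theorem integrable_mul_of_weighted_sq {f g ρ : X → ℝ} (hρ : ∀ x, 0 < ρ x)
    (hfm : AEMeasurable f m) (hgm : AEMeasurable g m) (hρm : AEMeasurable ρ m)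
    (hf : Integrable (fun x => f x ^ 2 * ρ x) m) (hg : Integrable (fun x => g x ^ 2 / ρ x) m) :
    Integrable (fun x => f x * g x) m := by
  obtain ⟨hf', hg'⟩ := memLp_two_mul_sqrt_and_div_sqrt hρ hfm hgm hρm hf hg
  exact (hf'.integrable_mul hg').congr (.of_forall fun x => mul_sqrt_mul_div_sqrt (hρ x))

theorem sq_integral_mul_le_of_weighted_sq {f g ρ : X → ℝ} (hρ : ∀ x, 0 < ρ x)
    (hfm : AEMeasurable f m) (hgm : AEMeasurable g m) (hρm : AEMeasurable ρ m)
    (hf : Integrable (fun x => f x ^ 2 * ρ x) m) (hg : Integrable (fun x => g x ^ 2 / ρ x) m) :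
    (∫ x, f x * g x ∂m) ^ 2 ≤ (∫ x, f x ^ 2 * ρ x ∂m) * ∫ x, g x ^ 2 / ρ x ∂m := by
  obtain ⟨hf', hg'⟩ := memLp_two_mul_sqrt_and_div_sqrt hρ hfm hgm hρm hf hg
  have hCS := sq_integral_mul_le_integral_sq_mul_integral_sq_s6 hf' hg'
  simp only [mul_sqrt_mul_div_sqrt (hρ _), mul_pow, div_pow, sq_sqrt (hρ _).le] at hCS
  exact hCS

end CauchySchwarz

theorem sq_sqrt_div_mul_sub_div_le {p r : ℝ} (hp : 0 ≤ p) (hpr : p ≤ r) (hr : 0 < r) :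
    (√(p / r) * (r - p)) ^ 2 / r ≤ p * (r - p) / r := by
  rw [div_le_div_iff_of_pos_right hr, mul_pow, sq_sqrt (div_nonneg hp hr.le)]
  have : (r - p) / r ≤ 1 := div_le_one_of_le₀ (by linarith) hr.le
  calc p / r * (r - p) ^ 2 = p * (r - p) * ((r - p) / r) := by ring
    _ ≤ p * (r - p) * 1 := by gcongr
    _ = p * (r - p) := mul_one _

def mixture {ι X : Type*} [Fintype ι] (w : ι → ℝ) (ρ : ι → X → ℝ) (x : X) : ℝ :=
  ∑ k, w k * ρ k x

section Mixture

variable {ι X : Type*} [Fintype ι] {w : ι → ℝ} {ρ : ι → X → ℝ}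

theorem mul_le_mixture_s6 (hw : ∀ k, 0 ≤ w k) (hρ : ∀ k x, 0 ≤ ρ k x) (j : ι) (x : X) :
    w j * ρ j x ≤ mixture w ρ x :=
  single_le_sum (f := fun k => w k * ρ k x) (fun k _ => mul_nonneg (hw k) (hρ k x)) (mem_univ j)

theorem mul_mixture_sub_div_eq_sum [DecidableEq ι] (j : ι) (x : X) :
    ρ j x * (mixture w ρ x - w j * ρ j x) / mixture w ρ x =
      ∑ k ∈ univ.erase j, w k * (ρ j x * ρ k x / mixture w ρ x) := by
  rw [mixture, ← sum_erase_eq_sub (mem_univ j), mul_sum, sum_div]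
  exact sum_congr rfl fun k _ => by ring

/-- The paper's `q_j`: `q_j²` is the posterior probability of component `j`. -/
def posteriorSqrt (w : ι → ℝ) (ρ : ι → X → ℝ) (j : ι) (x : X) : ℝ :=
  √(w j * ρ j x / mixture w ρ x)

theorem sq_posteriorSqrt (hw : ∀ k, 0 ≤ w k) (hρ : ∀ k x, 0 ≤ ρ k x)
    (hpos : ∀ x, 0 < mixture w ρ x) (j : ι) (x : X) :
    posteriorSqrt w ρ j x ^ 2 = w j * ρ j x / mixture w ρ x :=
  sq_sqrt (div_nonneg (mul_nonneg (hw j) (hρ j x)) (hpos x).le)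

theorem posteriorSqrt_mul_sub_sq_div_le (hw : ∀ k, 0 ≤ w k) (hρ : ∀ k x, 0 ≤ ρ k x)
    (hpos : ∀ x, 0 < mixture w ρ x) (j : ι) (x : X) :
    (posteriorSqrt w ρ j x * (mixture w ρ x - w j * ρ j x)) ^ 2 / mixture w ρ x ≤
      w j * (ρ j x * (mixture w ρ x - w j * ρ j x) / mixture w ρ x) :=
  (sq_sqrt_div_mul_sub_div_le (mul_nonneg (hw j) (hρ j x)) (mul_le_mixture_s6 hw hρ j x)
    (hpos x)).trans_eq (by ring)

variable [MeasurableSpace X] {m : Measure X}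

theorem aemeasurable_mixture (hρm : ∀ k, AEMeasurable (ρ k) m) : AEMeasurable (mixture w ρ) m :=
  Finset.aemeasurable_fun_sum _ fun k _ => (hρm k).const_mul (w k)

theorem integrable_mul_mul_div_mixture (hw : ∀ k, 0 ≤ w k) (hρ : ∀ k x, 0 ≤ ρ k x)
    (hint : ∀ k, Integrable (ρ k) m) (hpos : ∀ x, 0 < mixture w ρ x) (j k : ι) :
    Integrable (fun x => w k * (ρ j x * ρ k x / mixture w ρ x)) m := by
  have hM := aemeasurable_mixture (w := w) fun k => (hint k).aemeasurable
  refine ((hint j).bdd_mul (f := fun x => w k * ρ k x / mixture w ρ x) (c := 1)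
    (((hint k).aemeasurable.const_mul _).div hM).aestronglyMeasurable
    (.of_forall fun x => ?_)).congr
    (.of_forall fun x => by simp only; ring)
  rw [norm_eq_abs, abs_of_nonneg (div_nonneg (mul_nonneg (hw k) (hρ k x)) (hpos x).le)]
  exact div_le_one_of_le₀ (mul_le_mixture_s6 hw hρ k x) (hpos x).le

theorem integrable_mul_mixture_sub_div [DecidableEq ι] (hw : ∀ k, 0 ≤ w k)
    (hρ : ∀ k x, 0 ≤ ρ k x) (hint : ∀ k, Integrable (ρ k) m) (hpos : ∀ x, 0 < mixture w ρ x)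
    (j : ι) : Integrable (fun x => ρ j x * (mixture w ρ x - w j * ρ j x) / mixture w ρ x) m := by
  simp only [mul_mixture_sub_div_eq_sum]
  exact integrable_finsetSum _ fun k _ => integrable_mul_mul_div_mixture hw hρ hint hpos j k

theorem integral_mul_mixture_sub_div_le [DecidableEq ι] (hw : ∀ k, 0 ≤ w k) (hw1 : ∑ k, w k = 1)
    (hρ : ∀ k x, 0 ≤ ρ k x) (hint : ∀ k, Integrable (ρ k) m) (hpos : ∀ x, 0 < mixture w ρ x)
    {S : ℝ} (j : ι) (hS : ∀ k, k ≠ j → ∫ x, ρ j x * ρ k x / mixture w ρ x ∂m ≤ S) :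
    ∫ x, ρ j x * (mixture w ρ x - w j * ρ j x) / mixture w ρ x ∂m ≤ (1 - w j) * S := by
  simp only [mul_mixture_sub_div_eq_sum]
  rw [integral_finsetSum _ fun k _ => integrable_mul_mul_div_mixture hw hρ hint hpos j k]
  calc ∑ k ∈ univ.erase j, ∫ x, w k * (ρ j x * ρ k x / mixture w ρ x) ∂m
      ≤ ∑ k ∈ univ.erase j, w k * S := sum_le_sum fun k hk => by
        rw [integral_const_mul]
        exact mul_le_mul_of_nonneg_left (hS k (ne_of_mem_erase hk)) (hw k)
    _ = (1 - w j) * S := by rw [← sum_mul, sum_erase_eq_sub (mem_univ j), hw1]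

theorem aemeasurable_posteriorSqrt (hρm : ∀ k, AEMeasurable (ρ k) m) (j : ι) :
    AEMeasurable (posteriorSqrt w ρ j) m := by
  have := hρm j
  have := aemeasurable_mixture (w := w) hρm
  unfold posteriorSqrt
  fun_prop

theorem integrable_posteriorSqrt_mul_mixture_sq_div (hw : ∀ k, 0 ≤ w k)
    (hρ : ∀ k x, 0 ≤ ρ k x) (hint : ∀ k, Integrable (ρ k) m) (hpos : ∀ x, 0 < mixture w ρ x)
    (j : ι) :
    Integrable (fun x => (posteriorSqrt w ρ j x * mixture w ρ x) ^ 2 / mixture w ρ x) m :=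
  ((hint j).const_mul (w j)).congr (.of_forall fun x => by
    have := (hpos x).ne'
    simp only [mul_pow, sq_posteriorSqrt hw hρ hpos]
    field_simp)

theorem integrable_posteriorSqrt_mul_sub_sq_div [DecidableEq ι] (hw : ∀ k, 0 ≤ w k)
    (hρ : ∀ k x, 0 ≤ ρ k x) (hint : ∀ k, Integrable (ρ k) m) (hpos : ∀ x, 0 < mixture w ρ x)
    (j : ι) : Integrable (fun x =>
      (posteriorSqrt w ρ j x * (mixture w ρ x - w j * ρ j x)) ^ 2 / mixture w ρ x) m := by
  have hρm k := (hint k).aemeasurable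
  have hM := aemeasurable_mixture (w := w) hρm
  have hq := aemeasurable_posteriorSqrt (w := w) hρm j
  refine ((integrable_mul_mixture_sub_div hw hρ hint hpos j).const_mul (w j)).mono'
    (((hq.mul (hM.sub ((hρm j).const_mul _))).pow_const 2).div hM).aestronglyMeasurable
    (.of_forall fun x => ?_)
  rw [norm_eq_abs, abs_of_nonneg (div_nonneg (sq_nonneg _) (hpos x).le)]
  exact posteriorSqrt_mul_sub_sq_div_le hw hρ hpos j x

theorem integral_posteriorSqrt_mul_sub_sq_div_le [DecidableEq ι] (hw : ∀ k, 0 ≤ w k)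
    (hw1 : ∑ k, w k = 1) (hρ : ∀ k x, 0 ≤ ρ k x) (hint : ∀ k, Integrable (ρ k) m)
    (hpos : ∀ x, 0 < mixture w ρ x) {S : ℝ} (j : ι)
    (hS : ∀ k, k ≠ j → ∫ x, ρ j x * ρ k x / mixture w ρ x ∂m ≤ S) :
    ∫ x, (posteriorSqrt w ρ j x * (mixture w ρ x - w j * ρ j x)) ^ 2 / mixture w ρ x ∂m ≤
      w j * ((1 - w j) * S) := by
  have hdom := (integrable_mul_mixture_sub_div hw hρ hint hpos j).const_mul (w j)
  refine (integral_mono (integrable_posteriorSqrt_mul_sub_sq_div hw hρ hint hpos j) hdom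
    (posteriorSqrt_mul_sub_sq_div_le hw hρ hpos j)).trans ?_
  rw [integral_const_mul]
  exact mul_le_mul_of_nonneg_left (integral_mul_mixture_sub_div_le hw hw1 hρ hint hpos j hS) (hw j)

theorem mul_integral_mul_posteriorSqrt_eq_neg [DecidableEq ι] (hw : ∀ k, 0 ≤ w k)
    (hρ : ∀ k x, 0 ≤ ρ k x) (hint : ∀ k, Integrable (ρ k) m) (hpos : ∀ x, 0 < mixture w ρ x)
    {u : X → ℝ} (hu : AEMeasurable u m) (hu2 : Integrable (fun x => u x ^ 2 * mixture w ρ x) m)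
    (j : ι) (horth : ∫ x, u x * posteriorSqrt w ρ j x * mixture w ρ x ∂m = 0) :
    w j * ∫ x, u x * posteriorSqrt w ρ j x * ρ j x ∂m =
      -∫ x, u x * (posteriorSqrt w ρ j x * (mixture w ρ x - w j * ρ j x)) ∂m := by
  have hρm k := (hint k).aemeasurable
  have hM := aemeasurable_mixture (w := w) hρm
  have hq := aemeasurable_posteriorSqrt (w := w) hρm j
  have hqM : Integrable (fun x => u x * (posteriorSqrt w ρ j x * mixture w ρ x)) m :=
    integrable_mul_of_weighted_sq hpos hu (hq.mul hM) hM hu2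
      (integrable_posteriorSqrt_mul_mixture_sq_div hw hρ hint hpos j)
  have hqD : Integrable
      (fun x => u x * (posteriorSqrt w ρ j x * (mixture w ρ x - w j * ρ j x))) m :=
    integrable_mul_of_weighted_sq hpos hu (hq.mul (hM.sub ((hρm j).const_mul _))) hM hu2
      (integrable_posteriorSqrt_mul_sub_sq_div hw hρ hint hpos j)
  rw [← zero_sub, ← horth, ← integral_const_mul]
  simp only [mul_assoc]
  rw [← integral_sub hqM hqD]
  congr 1 with x
  ring

theorem sq_integral_mul_posteriorSqrt_mul_sub_le [DecidableEq ι] (hw : ∀ k, 0 ≤ w k)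
    (hw1 : ∑ k, w k = 1) (hρ : ∀ k x, 0 ≤ ρ k x) (hint : ∀ k, Integrable (ρ k) m)
    (hpos : ∀ x, 0 < mixture w ρ x) {u : X → ℝ} (hu : AEMeasurable u m)
    (hu2 : Integrable (fun x => u x ^ 2 * mixture w ρ x) m) {S : ℝ} (j : ι)
    (hS : ∀ k, k ≠ j → ∫ x, ρ j x * ρ k x / mixture w ρ x ∂m ≤ S) :
    (∫ x, u x * (posteriorSqrt w ρ j x * (mixture w ρ x - w j * ρ j x)) ∂m) ^ 2 ≤
      (∫ x, u x ^ 2 * mixture w ρ x ∂m) * (w j * ((1 - w j) * S)) := by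
  have hρm k := (hint k).aemeasurable
  have hM := aemeasurable_mixture (w := w) hρm
  have hq := aemeasurable_posteriorSqrt (w := w) hρm j
  refine (sq_integral_mul_le_of_weighted_sq hpos hu (hq.mul (hM.sub ((hρm j).const_mul _))) hM
    hu2 (integrable_posteriorSqrt_mul_sub_sq_div hw hρ hint hpos j)).trans ?_
  gcongr
  · exact integral_nonneg fun x => mul_nonneg (sq_nonneg _) (hpos x).le
  · exact integral_posteriorSqrt_mul_sub_sq_div_le hw hw1 hρ hint hpos j hS

end Mixture

theorem abs_le_sqrt_div_of_sq_mul_le {a c w : ℝ} (hw : 0 < w) (h : (w * a) ^ 2 ≤ w * c) :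
    |a| ≤ √(c / w) := by
  apply abs_le_sqrt
  rw [le_div_iff₀ hw]
  nlinarith

theorem statement6_general {X : Type*} [MeasurableSpace X] (m : Measure X)
    {N : ℕ}
    (w : Fin N → ℝ) (hw : ∀ k, 0 < w k) (hw1 : ∑ k, w k = 1)
    (ρ : Fin N → X → ℝ) (hnn : ∀ k x, 0 ≤ ρ k x)
    (hone : ∀ k, ∫ x, ρ k x ∂m = 1)
    (ρtot : X → ℝ) (hρtot : ρtot = fun x => ∑ k, w k * ρ k x)
    (hpos : ∀ x, 0 < ρtot x)
    (S : ℝ)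
    (hS : IsGreatest
      ((fun p : Fin N × Fin N => ∫ x, ρ p.1 x * ρ p.2 x / ρtot x ∂m) ''
        {p | p.1 ≠ p.2}) S)
    (j : Fin N)
    (u : X → ℝ) (hu : Measurable u)
    (hnorm : ∫ x, u x ^ 2 * ρtot x ∂m = 1)
    (horth : ∫ x, u x * Real.sqrt (w j * ρ j x / ρtot x) * ρtot x ∂m = 0) :
    |∫ x, u x * Real.sqrt (w j * ρ j x / ρtot x) * ρ j x ∂m| ≤
      Real.sqrt ((1 - w j) * S / w j) := by
  obtain rfl : ρtot = mixture w ρ := hρtot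
  change |∫ x, u x * posteriorSqrt w ρ j x * ρ j x ∂m| ≤ _
  have hw0 k := (hw k).le
  have hint k : Integrable (ρ k) m := integrable_of_integral_eq_one (hone k)
  have hu2 : Integrable (fun x => u x ^ 2 * mixture w ρ x) m := integrable_of_integral_eq_one hnorm
  refine abs_le_sqrt_div_of_sq_mul_le (hw j) ?_
  rw [mul_integral_mul_posteriorSqrt_eq_neg hw0 hnn hint hpos hu.aemeasurable hu2 j horth, neg_sq]
  simpa only [hnorm, one_mul] using sq_integral_mul_posteriorSqrt_mul_sub_le hw0 hw1 hnn hint hpos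
    hu.aemeasurable hu2 j fun k hk => hS.2 ⟨(j, k), hk.symm, rfl⟩

/-- if `u` is normalized in `L²(ρ)` and orthogonal to `q_j` in `L²(ρ)`,
then `|⟨u, q_j⟩_{ρ_j}| ≤ √((1 - w_j) S / w_j)`. -/
theorem statement6 {X : Type*} [MeasurableSpace X] (m : Measure X)
    {N : ℕ} (hN : 2 ≤ N)
    (w : Fin N → ℝ) (hw : ∀ k, 0 < w k) (hw1 : ∑ k, w k = 1)
    (ρ : Fin N → X → ℝ) (hmeas : ∀ k, Measurable (ρ k)) (hnn : ∀ k x, 0 ≤ ρ k x)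
    (hone : ∀ k, ∫ x, ρ k x ∂m = 1)
    (ρtot : X → ℝ) (hρtot : ρtot = fun x => ∑ k, w k * ρ k x)
    (hpos : ∀ x, 0 < ρtot x)
    (S : ℝ)
    (hS : IsGreatest
      ((fun p : Fin N × Fin N => ∫ x, ρ p.1 x * ρ p.2 x / ρtot x ∂m) ''
        {p | p.1 ≠ p.2}) S)
    (j : Fin N)
    (u : X → ℝ) (hu : Measurable u)
    (hnorm : ∫ x, u x ^ 2 * ρtot x ∂m = 1)
    (horth : ∫ x, u x * Real.sqrt (w j * ρ j x / ρtot x) * ρtot x ∂m = 0) :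
    |∫ x, u x * Real.sqrt (w j * ρ j x / ρtot x) * ρ j x ∂m| ≤
      Real.sqrt ((1 - w j) * S / w j) :=
  statement6_general m w hw hw1 ρ hnn hone ρtot hρtot hpos S hS j u hu hnorm horth
end
end

section
/- Let V be a real inner product space of finite dimension N ≥ 1, and let v_1, …, v_N be linearly independent unit vectors in V such that |⟨v_i, v_j⟩| ≤ δ for all i ≠ j, where δ > 0 satisfies N δ < 1. Then there exists an orthonormal basis ṽ_1, …, ṽ_N of V such that for every j = 1, …, N: ‖v_j − ṽ_j‖ ≤ √N·(1/√(1 − N δ) − 1). -/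
open Module Matrix Finset
open scoped MatrixOrder

/-!
The Gram matrix `G` of the `v j` has ones on the diagonal and off-diagonal entries of size at most
`δ`, so by Gershgorin its spectrum lies in `[1 - Nδ, 1 + Nδ]`. Löwdin's symmetric
orthogonalization `w = v G^{-1/2}` is orthonormal, and `v j - w j` has squared norm
`((1 - G^{-1/2}) G (1 - G^{-1/2}))_{jj} = (f(G))_{jj}` with `f(x) = (√x - 1)²`; on the spectrum
`f ≤ (1/√(1 - Nδ) - 1)²`, which bounds every diagonal entry of `f(G)`.
-/

theorem abs_sqrt_sub_one_le {d x : ℝ} (hd : d < 1) (h : |x - 1| ≤ d) :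
    |√x - 1| ≤ 1 / √(1 - d) - 1 := by
  obtain ⟨hlow, hupp⟩ := abs_le.mp h
  have hs0 : 0 < √(1 - d) := Real.sqrt_pos.mpr (by linarith)
  have hs1 : √(1 - d) ≤ 1 := Real.sqrt_le_one.mpr (by linarith)
  rw [abs_le]
  constructor
  · have hsx : √(1 - d) ≤ √x := Real.sqrt_le_sqrt (by linarith)
    have : 2 - √(1 - d) ≤ 1 / √(1 - d) := by rw [le_div_iff₀ hs0]; nlinarith
    linarith
  · have hsx : √x ≤ √(1 + d) := Real.sqrt_le_sqrt (by linarith)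
    -- `√(1 + d) √(1 - d) = √(1 - d²) ≤ 1`
    have : √(1 + d) ≤ 1 / √(1 - d) := by
      rw [le_div_iff₀ hs0, ← Real.sqrt_mul (by linarith)]
      exact Real.sqrt_le_one.mpr (by nlinarith)
    linarith

namespace Matrix

theorem spectrum_subset_closedBall_of_sum_row_le {K n : Type*} [NormedField K] [Fintype n]
    [DecidableEq n] (A : Matrix n n K) {c : K} {r : ℝ} (hdiag : ∀ k, A k k = c)
    (hrow : ∀ k, ∑ j ∈ univ.erase k, ‖A k j‖ ≤ r) :
    spectrum K A ⊆ Metric.closedBall c r := by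
  intro μ hμ
  rw [← spectrum_toLin', ← End.hasEigenvalue_iff_mem_spectrum] at hμ
  obtain ⟨k, hk⟩ := eigenvalue_mem_ball hμ
  rw [hdiag] at hk
  exact Metric.closedBall_subset_closedBall (hrow k) hk

theorem apply_self_le_of_le_algebraMap {n : Type*} [Fintype n] [DecidableEq n]
    {A : Matrix n n ℝ} {r : ℝ} (h : A ≤ algebraMap ℝ _ r) (j : n) : A j j ≤ r := by
  simpa [algebraMap_matrix_apply] using (le_iff.mp h).diag_nonneg (i := j)

theorem gram_sum_smul {𝕜 E n m : Type*} [RCLike 𝕜] [SeminormedAddCommGroup E]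
    [InnerProductSpace 𝕜 E] [Fintype n] (v : n → E) (B : Matrix n m 𝕜) :
    gram 𝕜 (fun j ↦ ∑ i, B i j • v i) = Bᴴ * gram 𝕜 v * B := by
  ext j k
  rw [gram_apply, ← star_dotProduct_gram_mulVec]
  simp only [mul_apply, dotProduct, mulVec, mul_sum, sum_mul, conjTranspose_apply,
    Pi.star_apply, mul_assoc]
  exact sum_comm

end Matrix

section Gram

variable {E n : Type*} [NormedAddCommGroup E] [InnerProductSpace ℝ E] [Fintype n] [DecidableEq n]

theorem spectrum_gram_subset_closedBall {v : n → E} (hunit : ∀ j, ‖v j‖ = 1) {δ : ℝ}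
    (hδ : 0 ≤ δ) (hinner : ∀ i j, i ≠ j → |inner ℝ (v i) (v j)| ≤ δ) :
    spectrum ℝ (gram ℝ v) ⊆ Metric.closedBall 1 (Fintype.card n * δ) := by
  refine spectrum_subset_closedBall_of_sum_row_le _ (fun k ↦ ?_) fun k ↦ ?_
  · rw [gram_apply, real_inner_self_eq_norm_sq, hunit k, one_pow]
  · calc ∑ j ∈ univ.erase k, ‖gram ℝ v k j‖
        ≤ ∑ j ∈ univ.erase k, δ :=
          sum_le_sum fun j hj ↦ hinner k j (ne_of_mem_erase hj).symm
      _ ≤ ∑ _j : n, δ := sum_le_sum_of_subset_of_nonneg (erase_subset k univ) fun _ _ _ ↦ hδ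
      _ = Fintype.card n * δ := by rw [sum_const, card_univ, nsmul_eq_mul]

theorem gram_sum_cfc_smul (v : n → E) (g : ℝ → ℝ) :
    gram ℝ (fun j ↦ ∑ i, cfc g (gram ℝ v) i j • v i)
      = cfc (fun x ↦ g x * x * g x) (gram ℝ v) := by
  have hG : IsSelfAdjoint (gram ℝ v) := isHermitian_gram ℝ v
  have hcont (f : ℝ → ℝ) : ContinuousOn f (spectrum ℝ (gram ℝ v)) :=
    finite_real_spectrum.continuousOn f
  rw [gram_sum_smul, ← star_eq_conjTranspose, IsSelfAdjoint.cfc.star_eq,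
    cfc_mul _ _ _ (hcont _) (hcont _), cfc_mul _ _ _ (hcont _) (hcont _), cfc_id' ℝ (gram ℝ v)]

noncomputable def lowdinOrthogonalization (v : n → E) (j : n) : E :=
  ∑ i, cfc (fun x ↦ (√x)⁻¹) (gram ℝ v) i j • v i

variable {v : n → E}

theorem LinearIndependent.pos_of_mem_spectrum_gram (hv : LinearIndependent ℝ v) {x : ℝ}
    (hx : x ∈ spectrum ℝ (gram ℝ v)) : 0 < x :=
  (posDef_gram_of_linearIndependent hv).isStrictlyPositive.spectrum_pos hx

theorem orthonormal_lowdinOrthogonalization (hv : LinearIndependent ℝ v) :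
    Orthonormal ℝ (lowdinOrthogonalization v) := by
  rw [← gram_eq_one_iff_orthonormal, ← cfc_one ℝ (gram ℝ v) (isHermitian_gram ℝ v)]
  unfold lowdinOrthogonalization
  rw [gram_sum_cfc_smul]
  refine cfc_congr fun x hx ↦ ?_
  rw [Pi.one_apply]
  have hx₀ := hv.pos_of_mem_spectrum_gram hx
  have : √x ≠ 0 := (Real.sqrt_pos.mpr hx₀).ne'
  field_simp
  exact (Real.sq_sqrt hx₀.le).symm

theorem norm_sub_lowdinOrthogonalization_le (hv : LinearIndependent ℝ v) {C : ℝ}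
    (hC : ∀ x ∈ spectrum ℝ (gram ℝ v), |√x - 1| ≤ C) (j : n) :
    ‖v j - lowdinOrthogonalization v j‖ ≤ C := by
  have hG : IsSelfAdjoint (gram ℝ v) := isHermitian_gram ℝ v
  have hcont (f : ℝ → ℝ) : ContinuousOn f (spectrum ℝ (gram ℝ v)) :=
    finite_real_spectrum.continuousOn f
  have hdiff : v j - lowdinOrthogonalization v j
      = ∑ i, cfc (fun x ↦ 1 - (√x)⁻¹) (gram ℝ v) i j • v i := by
    simp only [lowdinOrthogonalization, cfc_sub _ _ _ (hcont _) (hcont _),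
      cfc_const_one ℝ (gram ℝ v), Matrix.sub_apply, one_apply, sub_smul, ite_smul, one_smul,
      zero_smul, sum_sub_distrib, sum_ite_eq', mem_univ, ↓reduceIte]
  have hsq : ‖v j - lowdinOrthogonalization v j‖ ^ 2 ≤ C ^ 2 := by
    have hgram := congrFun (congrFun (gram_sum_cfc_smul v fun x ↦ 1 - (√x)⁻¹) j) j
    rw [gram_apply, ← hdiff, real_inner_self_eq_norm_sq] at hgram
    rw [hgram]
    refine apply_self_le_of_le_algebraMap (cfc_le_algebraMap _ _ _ (fun x hx ↦ ?_) (hcont _)) j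
    have hx₀ := hv.pos_of_mem_spectrum_gram hx
    have : √x ≠ 0 := (Real.sqrt_pos.mpr hx₀).ne'
    have hf : (1 - (√x)⁻¹) * x * (1 - (√x)⁻¹) = (√x - 1) ^ 2 := by
      field_simp
      rw [Real.sq_sqrt hx₀.le]
      ring
    rw [hf]
    exact sq_le_sq' (abs_le.mp (hC x hx)).1 (abs_le.mp (hC x hx)).2
  have hC₀ : 0 ≤ C := by
    have : Nonempty n := ⟨j⟩
    obtain ⟨x, hx⟩ := ContinuousFunctionalCalculus.spectrum_nonempty (R := ℝ) (gram ℝ v) hG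
    exact (abs_nonneg _).trans (hC x hx)
  exact (pow_le_pow_iff_left₀ (norm_nonneg _) hC₀ two_ne_zero).mp hsq

theorem exists_orthonormalBasis_norm_sub_le [FiniteDimensional ℝ E] (hv : LinearIndependent ℝ v)
    (hcard : Fintype.card n = finrank ℝ E) {C : ℝ}
    (hC : ∀ x ∈ spectrum ℝ (gram ℝ v), |√x - 1| ≤ C) :
    ∃ b : OrthonormalBasis n ℝ E, ∀ j, ‖v j - b j‖ ≤ C := by
  have hon := orthonormal_lowdinOrthogonalization hv
  have hspan := hon.linearIndependent.span_eq_top_of_card_eq_finrank' hcard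
  refine ⟨.mk hon hspan.ge, fun j ↦ ?_⟩
  rw [OrthonormalBasis.coe_mk]
  exact norm_sub_lowdinOrthogonalization_le hv hC j

end Gram

theorem statement12_general {V : Type*} [NormedAddCommGroup V] [InnerProductSpace ℝ V]
    [FiniteDimensional ℝ V]
    {N : ℕ} (hdim : Module.finrank ℝ V = N)
    (v : Fin N → V) (hli : LinearIndependent ℝ v) (hunit : ∀ j, ‖v j‖ = 1)
    (δ : ℝ) (hδpos : 0 < δ)
    (hinner : ∀ i j, i ≠ j → |(inner ℝ (v i) (v j) : ℝ)| ≤ δ)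
    (hNδ : (N : ℝ) * δ < 1) :
    ∃ b : OrthonormalBasis (Fin N) ℝ V,
      ∀ j, ‖v j - b j‖ ≤ Real.sqrt N * (1 / Real.sqrt (1 - N * δ) - 1) := by
  have hspec : ∀ x ∈ spectrum ℝ (gram ℝ v), |√x - 1| ≤ 1 / √(1 - N * δ) - 1 := by
    intro x hx
    have hball := spectrum_gram_subset_closedBall hunit hδpos.le hinner hx
    rw [Metric.mem_closedBall, Real.dist_eq, Fintype.card_fin] at hball
    exact abs_sqrt_sub_one_le hNδ hball
  obtain ⟨b, hb⟩ :=
    exists_orthonormalBasis_norm_sub_le hli (by rw [Fintype.card_fin, hdim]) hspec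
  refine ⟨b, fun j ↦ (hb j).trans (le_mul_of_one_le_left ((norm_nonneg _).trans (hb j)) ?_)⟩
  exact Real.one_le_sqrt.mpr (by exact_mod_cast j.pos)

/-- near-orthogonal vectors: linearly independent unit vectors with
pairwise inner products at most `δ`, `N δ < 1`, are `√N (1/√(1−Nδ) − 1)`-close to an
orthonormal basis. -/
theorem statement12 {V : Type*} [NormedAddCommGroup V] [InnerProductSpace ℝ V]
    [FiniteDimensional ℝ V]
    {N : ℕ} (hN : 1 ≤ N) (hdim : Module.finrank ℝ V = N)
    (v : Fin N → V) (hli : LinearIndependent ℝ v) (hunit : ∀ j, ‖v j‖ = 1)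
    (δ : ℝ) (hδpos : 0 < δ)
    (hinner : ∀ i j, i ≠ j → |(inner ℝ (v i) (v j) : ℝ)| ≤ δ)
    (hNδ : (N : ℝ) * δ < 1) :
    ∃ b : OrthonormalBasis (Fin N) ℝ V,
      ∀ j, ‖v j - b j‖ ≤ Real.sqrt N * (1 / Real.sqrt (1 - N * δ) - 1) :=
  statement12_general hdim v hli hunit δ hδpos hinner hNδ
end

section
/- Let (Ω, 𝔉, ν) be a probability space and let z : Ω → ℝ be measurable with ∫ z² dν < ∞ and ν({z ≤ 0}) = 1/2. Then ∫_ℝ min{ ν({z ≤ t}), ν({z > t}) } · 2|t| dt = ∫_Ω z² dν, where the left-hand side is a Lebesgue integral over t ∈ ℝ. -/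
/-!
Split the real line at the median `0`. For `t ≥ 0` the smaller tail is `ν {t < z}` and for
`t < 0` it is `ν {z ≤ t}`, so the two halves of the integral are the layer-cake formulas for
`∫ (z⁺)² dν` and `∫ (z⁻)² dν`, whose sum is `∫ z² dν`.
-/

open MeasureTheory Real Set ENNReal

lemma max_neg_zero_sq_add_max_zero_sq (x : ℝ) : max (-x) 0 ^ 2 + max x 0 ^ 2 = x ^ 2 := by
  rcases le_total x 0 with hx | hx
  · rw [max_eq_left (neg_nonneg.2 hx), max_eq_right hx]; ring
  · rw [max_eq_right (neg_nonpos.2 hx), max_eq_left hx]; ring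

lemma lintegral_comp_neg_Ioi (c : ℝ) (g : ℝ → ℝ≥0∞) :
    ∫⁻ t in Ioi c, g (-t) = ∫⁻ t in Iio (-c), g t := by
  rw [← (Measure.measurePreserving_neg volume).setLIntegral_comp_preimage_emb
    (Homeomorph.neg ℝ).measurableEmbedding, neg_preimage, neg_Ioi]
  simp only [neg_neg]

namespace MeasureTheory

variable {Ω : Type*} [MeasurableSpace Ω] (μ : Measure Ω) {f : Ω → ℝ}

lemma lintegral_ofReal_max_sq_eq_lintegral_meas_le (hf : AEMeasurable f μ) :
    ∫⁻ ω, ENNReal.ofReal (max (f ω) 0 ^ 2) ∂μ =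
      ∫⁻ t in Ioi 0, μ {ω | t ≤ f ω} * ENNReal.ofReal (2 * t) := by
  have h_sq : ∀ x : ℝ, ∫ t in (0 : ℝ)..x, 2 * t = x ^ 2 := fun x => by
    rw [intervalIntegral.integral_const_mul, integral_id]; ring
  have h_layercake := lintegral_comp_eq_lintegral_meas_le_mul μ (f := fun ω => max (f ω) 0)
    (g := fun t => 2 * t) (ae_of_all _ fun ω => le_max_right _ _)
    (hf.max aemeasurable_const) (fun t _ => (continuous_const_mul 2).intervalIntegrable 0 t)
    (ae_restrict_of_forall_mem measurableSet_Ioi fun t (ht : 0 < t) => by positivity)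
  simp only [h_sq] at h_layercake
  rw [h_layercake]
  refine setLIntegral_congr_fun measurableSet_Ioi fun t (ht : 0 < t) => ?_
  simp only [le_max_iff, ht.not_ge, or_false]

lemma lintegral_ofReal_max_sq_eq_lintegral_meas_lt (hf : AEMeasurable f μ) :
    ∫⁻ ω, ENNReal.ofReal (max (f ω) 0 ^ 2) ∂μ =
      ∫⁻ t in Ioi 0, μ {ω | t < f ω} * ENNReal.ofReal (2 * t) := by
  rw [lintegral_ofReal_max_sq_eq_lintegral_meas_le μ hf]
  refine lintegral_congr_ae ?_
  filter_upwards [meas_le_ae_eq_meas_lt μ (volume.restrict (Ioi 0)) f] with t ht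
  rw [ht]

lemma lintegral_ofReal_max_neg_sq_eq_lintegral_meas_le (hf : AEMeasurable f μ) :
    ∫⁻ ω, ENNReal.ofReal (max (-f ω) 0 ^ 2) ∂μ =
      ∫⁻ t in Iio 0, μ {ω | f ω ≤ t} * ENNReal.ofReal (-(2 * t)) := by
  rw [lintegral_ofReal_max_sq_eq_lintegral_meas_le μ (f := fun ω => -f ω) hf.neg, ← neg_zero,
    ← lintegral_comp_neg_Ioi]
  simp only [le_neg, neg_neg, neg_zero, mul_neg]

variable {μ}

lemma min_meas_le_meas_lt_eq_meas_lt (h : μ {ω | 0 < f ω} ≤ μ {ω | f ω ≤ 0}) {t : ℝ}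
    (ht : 0 ≤ t) : min (μ {ω | f ω ≤ t}) (μ {ω | t < f ω}) = μ {ω | t < f ω} :=
  min_eq_right <| calc
    μ {ω | t < f ω} ≤ μ {ω | 0 < f ω} := measure_mono fun _ hω => ht.trans_lt hω
    _ ≤ μ {ω | f ω ≤ 0} := h
    _ ≤ μ {ω | f ω ≤ t} := measure_mono fun _ hω => le_trans hω ht

lemma min_meas_le_meas_lt_eq_meas_le (h : μ {ω | f ω ≤ 0} ≤ μ {ω | 0 < f ω}) {t : ℝ}
    (ht : t ≤ 0) : min (μ {ω | f ω ≤ t}) (μ {ω | t < f ω}) = μ {ω | f ω ≤ t} :=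
  min_eq_left <| calc
    μ {ω | f ω ≤ t} ≤ μ {ω | f ω ≤ 0} := measure_mono fun _ hω => le_trans hω ht
    _ ≤ μ {ω | 0 < f ω} := h
    _ ≤ μ {ω | t < f ω} := measure_mono fun _ hω => ht.trans_lt hω

theorem lintegral_min_meas_mul_abs_eq_lintegral_sq (hf : AEMeasurable f μ)
    (hmed : μ {ω | 0 < f ω} = μ {ω | f ω ≤ 0}) :
    ∫⁻ t, min (μ {ω | f ω ≤ t}) (μ {ω | t < f ω}) * ENNReal.ofReal (2 * |t|) =
      ∫⁻ ω, ENNReal.ofReal (f ω ^ 2) ∂μ := by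
  have h_neg : ∫⁻ t in Iio 0, min (μ {ω | f ω ≤ t}) (μ {ω | t < f ω}) *
      ENNReal.ofReal (2 * |t|) = ∫⁻ ω, ENNReal.ofReal (max (-f ω) 0 ^ 2) ∂μ := by
    rw [lintegral_ofReal_max_neg_sq_eq_lintegral_meas_le μ hf]
    refine setLIntegral_congr_fun measurableSet_Iio fun t (ht : t < 0) => ?_
    rw [min_meas_le_meas_lt_eq_meas_le hmed.ge ht.le, abs_of_neg ht, mul_neg]
  have h_pos : ∫⁻ t in Ici 0, min (μ {ω | f ω ≤ t}) (μ {ω | t < f ω}) *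
      ENNReal.ofReal (2 * |t|) = ∫⁻ ω, ENNReal.ofReal (max (f ω) 0 ^ 2) ∂μ := by
    rw [lintegral_ofReal_max_sq_eq_lintegral_meas_lt μ hf, ← setLIntegral_congr Ioi_ae_eq_Ici]
    refine setLIntegral_congr_fun measurableSet_Ioi fun t (ht : 0 < t) => ?_
    rw [min_meas_le_meas_lt_eq_meas_lt hmed.le ht.le, abs_of_pos ht]
  rw [← lintegral_add_compl _ measurableSet_Iio, compl_Iio, h_neg, h_pos,
    ← lintegral_add_left' (f := fun ω => ENNReal.ofReal (max (-f ω) 0 ^ 2))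
      ((hf.neg.max aemeasurable_const).pow_const 2).ennreal_ofReal]
  refine lintegral_congr fun ω => ?_
  rw [← ENNReal.ofReal_add (by positivity) (by positivity), max_neg_zero_sq_add_max_zero_sq]

end MeasureTheory

theorem statement15_general {Ω : Type*} [MeasurableSpace Ω] (ν : Measure Ω)
    [IsProbabilityMeasure ν]
    (z : Ω → ℝ) (hz : Measurable z)
    (hmed : ν {ω | z ω ≤ 0} = 1 / 2) :
    ∫ t : ℝ, min (ν {ω | z ω ≤ t}).toReal (ν {ω | t < z ω}).toReal * (2 * |t|) =
      ∫ ω, z ω ^ 2 ∂ν := by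
  have h_balanced : ν {ω | 0 < z ω} = ν {ω | z ω ≤ 0} := by
    rw [show {ω | 0 < z ω} = {ω | z ω ≤ 0}ᶜ by ext; simp, prob_compl_eq_one_sub (measurableSet_le hz measurable_const), hmed,
      one_div, ENNReal.one_sub_inv_two]
  have h_lower : Monotone fun t => ν {ω | z ω ≤ t} :=
    fun _ _ hst => measure_mono fun _ hω => le_trans hω hst
  have h_upper : Antitone fun t => ν {ω | t < z ω} :=
    fun _ _ hst => measure_mono fun _ hω => hst.trans_lt hω
  have h_integrand : ∀ t : ℝ, min (ν {ω | z ω ≤ t}).toReal (ν {ω | t < z ω}).toReal * (2 * |t|)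
      = (min (ν {ω | z ω ≤ t}) (ν {ω | t < z ω}) * ENNReal.ofReal (2 * |t|)).toReal := fun t => by
    rw [toReal_mul, toReal_ofReal (by positivity), ← toReal_min (measure_ne_top _ _)
      (measure_ne_top _ _)]
  simp_rw [h_integrand]
  rw [integral_toReal, lintegral_min_meas_mul_abs_eq_lintegral_sq hz.aemeasurable h_balanced,
    integral_eq_lintegral_of_nonneg_ae (ae_of_all _ fun ω => sq_nonneg (z ω))
      (hz.pow_const 2).aestronglyMeasurable]
  · exact ((h_lower.measurable.min h_upper.measurable).mul
      (measurable_const.mul measurable_abs).ennreal_ofReal).aemeasurable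
  · exact ae_of_all _ fun t => mul_lt_top (min_lt_iff.2 (.inl (measure_lt_top _ _))) ofReal_lt_top

/-- layer-cake identity from the proof of Cheeger's inequality:
if `z` is square integrable and `ν({z ≤ 0}) = 1/2`, then
`∫_ℝ min{ν({z ≤ t}), ν({z > t})}·2|t| dt = ∫ z² dν`. -/
theorem statement15 {Ω : Type*} [MeasurableSpace Ω] (ν : Measure Ω)
    [IsProbabilityMeasure ν]
    (z : Ω → ℝ) (hz : Measurable z)
    (hz2 : Integrable (fun ω => z ω ^ 2) ν)
    (hmed : ν {ω | z ω ≤ 0} = 1 / 2) :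
    ∫ t : ℝ, min (ν {ω | z ω ≤ t}).toReal (ν {ω | t < z ω}).toReal * (2 * |t|) =
      ∫ ω, z ω ^ 2 ∂ν :=
  statement15_general ν z hz hmed
end

section
/- Let ℓ, ϑ > 0 with ϑ < ℓ/2 and let 0 < ε < ℓ/2. Define the dumbbell domain M := M_0 ∪ M_1 ∪ M_2 ⊂ ℝ², where M_0 := (−ℓ/2, ℓ/2) × (−ϑ, ϑ), M_1 := (ℓ/2, ℓ) × (−ℓ/2, ℓ/2) and M_2 := (−ℓ, −ℓ/2) × (−ℓ/2, ℓ/2). Let ψ be the function ψ(t) = 1 for t ≤ 0, 1 − 2t²/ε² for t ∈ [0, ε/2], 2(t − ε)²/ε² for t ∈ [ε/2, ε], 0 for t ≥ ε; set ρ̃_1(x) := ψ(x_1), ρ̃_2(x) := ψ(−x_1) for x = (x_1, x_2) ∈ M, and ρ_k := 2 ρ̃_k/(ρ̃_1 + ρ̃_2) for k = 1, 2. Then ∫_M ρ_1(x) ρ_2(x) dx ≤ 16 ϑ ε. -/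
/-!
The overlap `ρ₁ ρ₂ = 4 ψ̃₁ ψ̃₂ / (ψ̃₁ + ψ̃₂)²` is at most `1` by AM-GM, and it vanishes as soon as
`|x₁| ≥ ε`, because then one of `ψ(x₁)`, `ψ(-x₁)` is zero. Since `ε < ℓ/2`, the part of the
dumbbell where `|x₁| < ε` is the rectangle `(-ε, ε) × (-ϑ, ϑ)` inside the bar, so the integral is
at most its area `4 ε ϑ`.
-/

open MeasureTheory Real Set

noncomputable section

def cutoff (ε t : ℝ) : ℝ :=
  if t ≤ 0 then 1
  else if t ≤ ε / 2 then 1 - 2 * t ^ 2 / ε ^ 2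
  else if t ≤ ε then 2 * (t - ε) ^ 2 / ε ^ 2
  else 0

lemma cutoff_nonneg (ε t : ℝ) : 0 ≤ cutoff ε t := by
  unfold cutoff
  split_ifs with h₀ h₁
  · exact zero_le_one
  · have hε : 0 < ε := by linarith
    have : 2 * t ^ 2 / ε ^ 2 ≤ 1 / 2 := by
      rw [div_le_iff₀ (by positivity)]
      nlinarith
    linarith
  · positivity
  · exact le_rfl

lemma cutoff_eq_zero_of_le {ε t : ℝ} (hε : 0 < ε) (ht : ε ≤ t) : cutoff ε t = 0 := by
  rcases ht.eq_or_lt with rfl | ht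
  · simp [cutoff, hε.not_ge, hε]
  · simp [cutoff, (hε.trans ht).not_ge, ht.not_ge, (half_lt_self hε).trans ht |>.not_ge]

def overlap (g : ℝ → ℝ) (s : ℝ) : ℝ :=
  2 * g s / (g s + g (-s)) * (2 * g (-s) / (g s + g (-s)))

lemma norm_overlap_le_one {g : ℝ → ℝ} (hg : ∀ t, 0 ≤ g t) (s : ℝ) : ‖overlap g s‖ ≤ 1 := by
  have ha := hg s
  have hb := hg (-s)
  rw [overlap, Real.norm_of_nonneg (by positivity)]
  rcases (add_nonneg ha hb).eq_or_lt with hab | hab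
  · simp [← hab]
  · rw [div_mul_div_comm, div_le_one (by positivity)]
    nlinarith [sq_nonneg (g s - g (-s))]

lemma overlap_eq_zero_of_le_abs {g : ℝ → ℝ} {ε s : ℝ} (hg : ∀ t, ε ≤ t → g t = 0)
    (hs : ε ≤ |s|) : overlap g s = 0 := by
  rcases le_abs.mp hs with hs | hs
  · simp [overlap, hg s hs]
  · simp [overlap, hg (-s) hs]

def dumbbell (l ϑ : ℝ) : Set (ℝ × ℝ) :=
  (Ioo (-(l / 2)) (l / 2) ×ˢ Ioo (-ϑ) ϑ) ∪ (Ioo (l / 2) l ×ˢ Ioo (-(l / 2)) (l / 2)) ∪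
    (Ioo (-l) (-(l / 2)) ×ˢ Ioo (-(l / 2)) (l / 2))

section Dumbbell

variable {l ϑ ε : ℝ}

lemma measurableSet_dumbbell : MeasurableSet (dumbbell l ϑ) := by
  unfold dumbbell
  measurability

lemma Ioo_prod_Ioo_subset_dumbbell (hεl : ε ≤ l / 2) :
    Ioo (-ε) ε ×ˢ Ioo (-ϑ) ϑ ⊆ dumbbell l ϑ := fun x ⟨⟨h₁, h₂⟩, hx₂⟩ =>
  Or.inl (Or.inl ⟨⟨by linarith, by linarith⟩, hx₂⟩)

lemma mem_Ioo_prod_Ioo_of_mem_dumbbell {x : ℝ × ℝ} (hεl : ε ≤ l / 2) (hx : x ∈ dumbbell l ϑ)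
    (hx₁ : |x.1| < ε) : x ∈ Ioo (-ε) ε ×ˢ Ioo (-ϑ) ϑ := by
  obtain ⟨h₁, h₂⟩ := abs_lt.mp hx₁
  rcases hx with (hx | hx) | hx
  · exact ⟨⟨h₁, h₂⟩, hx.2⟩
  · linarith [hx.1.1]
  · linarith [hx.1.2]

end Dumbbell

lemma volume_real_Ioo_prod_Ioo {a b : ℝ} (ha : 0 ≤ a) (hb : 0 ≤ b) :
    volume.real (Ioo (-a) a ×ˢ Ioo (-b) b) = 2 * a * (2 * b) := by
  rw [Measure.volume_eq_prod, measureReal_prod_prod, volume_real_Ioo_of_le (by linarith),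
    volume_real_Ioo_of_le (by linarith)]
  ring

theorem statement19_general (l ϑ ε : ℝ) (hϑ : 0 < ϑ)
    (hε : 0 < ε) (hεl : ε < l / 2)
    (M : Set (ℝ × ℝ))
    (hM : M = (Set.Ioo (-(l / 2)) (l / 2) ×ˢ Set.Ioo (-ϑ) ϑ) ∪
      (Set.Ioo (l / 2) l ×ˢ Set.Ioo (-(l / 2)) (l / 2)) ∪
      (Set.Ioo (-l) (-(l / 2)) ×ˢ Set.Ioo (-(l / 2)) (l / 2)))
    (ψ : ℝ → ℝ)
    (hψ : ψ = fun t =>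
      if t ≤ 0 then 1
      else if t ≤ ε / 2 then 1 - 2 * t ^ 2 / ε ^ 2
      else if t ≤ ε then 2 * (t - ε) ^ 2 / ε ^ 2
      else 0)
    (ρ₁ ρ₂ : ℝ × ℝ → ℝ)
    (h₁ : ρ₁ = fun x => 2 * ψ x.1 / (ψ x.1 + ψ (-x.1)))
    (h₂ : ρ₂ = fun x => 2 * ψ (-x.1) / (ψ x.1 + ψ (-x.1))) :
    ∫ x in M, ρ₁ x * ρ₂ x ≤ 16 * ϑ * ε := by
  replace hM : M = dumbbell l ϑ := hM
  replace hψ : ψ = cutoff ε := hψ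
  subst hM hψ h₁ h₂
  change ∫ x in dumbbell l ϑ, overlap (cutoff ε) x.1 ≤ _
  set S := Ioo (-ε) ε ×ˢ Ioo (-ϑ) ϑ
  have hvanish : ∀ x ∈ dumbbell l ϑ \ S, overlap (cutoff ε) x.1 = 0 := fun x ⟨hxM, hxS⟩ =>
    overlap_eq_zero_of_le_abs (fun _ => cutoff_eq_zero_of_le hε)
      (not_lt.mp fun hx₁ => hxS (mem_Ioo_prod_Ioo_of_mem_dumbbell hεl.le hxM hx₁))
  calc _ = ∫ x in S, overlap (cutoff ε) x.1 :=
        setIntegral_eq_of_subset_of_forall_sdiff_eq_zero measurableSet_dumbbell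
          (Ioo_prod_Ioo_subset_dumbbell hεl.le) hvanish
    _ ≤ 1 * volume.real S := (le_norm_self _).trans <| norm_setIntegral_le_of_norm_le_const
          ((Metric.isBounded_Ioo _ _).prod (Metric.isBounded_Ioo _ _)).measure_lt_top
          fun x _ => norm_overlap_le_one (cutoff_nonneg ε) x.1
    _ = 4 * ε * ϑ := by rw [volume_real_Ioo_prod_Ioo hε.le hϑ.le]; ring
    _ ≤ 16 * ϑ * ε := by nlinarith [mul_pos hε hϑ]

/-- dumbbell domain: for the perpendicular partition of the dumbbell
`M = M₀ ∪ M₁ ∪ M₂` with profile `ψ` and densities `ρ_k = 2ψ̃_k/(ψ̃₁ + ψ̃₂)`,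
the overlap satisfies `∫_M ρ₁ ρ₂ dx ≤ 16 ϑ ε`. -/
theorem statement19 (l ϑ ε : ℝ) (hϑ : 0 < ϑ) (hϑl : ϑ < l / 2)
    (hε : 0 < ε) (hεl : ε < l / 2)
    (M : Set (ℝ × ℝ))
    (hM : M = (Set.Ioo (-(l / 2)) (l / 2) ×ˢ Set.Ioo (-ϑ) ϑ) ∪
      (Set.Ioo (l / 2) l ×ˢ Set.Ioo (-(l / 2)) (l / 2)) ∪
      (Set.Ioo (-l) (-(l / 2)) ×ˢ Set.Ioo (-(l / 2)) (l / 2)))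
    (ψ : ℝ → ℝ)
    (hψ : ψ = fun t =>
      if t ≤ 0 then 1
      else if t ≤ ε / 2 then 1 - 2 * t ^ 2 / ε ^ 2
      else if t ≤ ε then 2 * (t - ε) ^ 2 / ε ^ 2
      else 0)
    (ρ₁ ρ₂ : ℝ × ℝ → ℝ)
    (h₁ : ρ₁ = fun x => 2 * ψ x.1 / (ψ x.1 + ψ (-x.1)))
    (h₂ : ρ₂ = fun x => 2 * ψ (-x.1) / (ψ x.1 + ψ (-x.1))) :
    ∫ x in M, ρ₁ x * ρ₂ x ≤ 16 * ϑ * ε :=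
  statement19_general l ϑ ε hϑ hε hεl M hM ψ hψ ρ₁ ρ₂ h₁ h₂
end
end
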